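/- arXiv:2007.01424 — 5 statements merged into one kernel-verified Lean document; each statement's English description precedes it below -/
import Mathlib

section
/- For the actSIS risk-tolerator model, an endemic equilibrium (p*, p*) with p* ∈ (0,1) is locally exponentially stable if φᵀ′(p*)·(1−p*)² < δ/β̄, i.e., both eigenvalues of the Jacobian at the equilibrium have negative real part under this condition. -/
/-! Both eigenvalues have negative real part as soon as the Jacobian has negative trace and
positive determinant (Routh–Hurwitz for `2 × 2`). The trace is `-δp*/(1-p*) - 1/τ_s < 0`, and
`τ_s · det = p*(δ/(1-p*) - β̄(1-p*)φᵀ′(p*))`, which is positive precisely under the stability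
condition. -/

theorem Complex.re_neg_of_sq_sub_mul_add_eq_zero {T D : ℝ} (hT : T < 0) (hD : 0 < D) {z : ℂ}
    (hz : z ^ 2 - T * z + D = 0) : z.re < 0 := by
  have hre : z.re ^ 2 - z.im ^ 2 - T * z.re + D = 0 := by
    simpa [pow_two] using congrArg Complex.re hz
  have him : z.im * (2 * z.re - T) = 0 := by
    linear_combination (by simpa [pow_two] using congrArg Complex.im hz :
      z.re * z.im + z.im * z.re - T * z.im = 0)
  rcases mul_eq_zero.mp him with hreal | hcentre
  · by_contra! hnonneg
    nlinarith [mul_nonneg (neg_nonneg.mpr hT.le) hnonneg]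
  · linarith

theorem actSIS_tolerator_EE_stable_general (β δ τ : ℝ) (hβ : 0 < β) (hδ : 0 < δ)
    (hτ : 0 < τ) (φT' : ℝ → ℝ)
    (p : ℝ) (hp : p ∈ Set.Ioo (0 : ℝ) 1)
    (hcond : φT' p * (1 - p) ^ 2 < δ / β)
    (J : Matrix (Fin 2) (Fin 2) ℝ)
    (hJ : J = !![-(δ * p / (1 - p)), β * (1 - p) * p * φT' p;
                 1 / τ, -(1 / τ)]) :
    ∀ z : ℂ, z ^ 2 - (J.trace : ℂ) * z + (J.det : ℂ) = 0 → z.re < 0 := by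
  obtain ⟨hp0, hp1⟩ := hp
  have hq : 0 < 1 - p := by linarith
  have hrecovery : 0 < δ * p / (1 - p) := by positivity
  have htrace : J.trace < 0 := by
    rw [hJ, Matrix.trace_fin_two_of]
    linarith [one_div_pos.mpr hτ]
  have hdet : 0 < J.det := by
    have hβcond : β * (φT' p * (1 - p) ^ 2) < δ := (lt_div_iff₀' hβ).mp hcond
    have hgain : β * (1 - p) * p * φT' p < δ * p / (1 - p) := by
      rw [lt_div_iff₀ hq]
      nlinarith
    rw [hJ, Matrix.det_fin_two_of]
    nlinarith [one_div_pos.mpr hτ]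
  exact fun z hz => Complex.re_neg_of_sq_sub_mul_add_eq_zero htrace hdet hz

/-- actSIS risk-tolerators: an endemic equilibrium p* ∈ (0,1) is locally
exponentially stable if φᵀ′(p*)(1−p*)² < δ/β̄ : both eigenvalues of the
Jacobian have negative real part. -/
theorem actSIS_tolerator_EE_stable (β δ τ : ℝ) (hβ : 0 < β) (hδ : 0 < δ)
    (hτ : 0 < τ) (φT φT' : ℝ → ℝ) (hderiv : ∀ x, HasDerivAt φT (φT' x) x)
    (p : ℝ) (hp : p ∈ Set.Ioo (0 : ℝ) 1)
    (hEE : φT p * (1 - p) = δ / β)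
    (hcond : φT' p * (1 - p) ^ 2 < δ / β)
    (J : Matrix (Fin 2) (Fin 2) ℝ)
    (hJ : J = !![-(δ * p / (1 - p)), β * (1 - p) * p * φT' p;
                 1 / τ, -(1 / τ)]) :
    ∀ z : ℂ, z ^ 2 - (J.trace : ℂ) * z + (J.det : ℂ) = 0 → z.re < 0 :=
  actSIS_tolerator_EE_stable_general β δ τ hβ hδ hτ φT' p hp hcond J hJ
end

section
/- For the actSIS risk-tolerator model, the critical transmission rate β̄_c = δ / max_{p∈[0,1]} (φᵀ(p)(1−p)) satisfies β̄_c/δ > 1; that is, endemic equilibria exist only for β̄ ≥ β̄_c > δ, so the epidemic threshold strictly exceeds that of the SIS model. -/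
/-!
The maximum `m` of `g p = φᵀ(p) (1 - p)` on `[0, 1]` is positive, since `φᵀ` rises above
`φᵀ(0) = 0` while `1 - p` is still positive, and below `1`, since `g p ≤ φᵀ(p) < 1` for `p < 1`
and `g 1 = 0`. Hence `β̄_c / δ = 1 / m > 1`, and an equilibrium `g p = δ / β̄` forces
`δ / β̄ ≤ m`, i.e. `β̄ ≥ δ / m = β̄_c`.
-/

open Set

section

variable {φ : ℝ → ℝ}

theorem exists_mem_Icc_mul_one_sub_pos (hmono : StrictMonoOn φ (Icc 0 1)) (h0 : 0 ≤ φ 0) :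
    ∃ p ∈ Icc (0 : ℝ) 1, 0 < φ p * (1 - p) := by
  have hhalf : (1 / 2 : ℝ) ∈ Icc 0 1 := by norm_num
  have hφhalf : φ 0 < φ (1 / 2) := hmono (by norm_num) hhalf (by norm_num)
  exact ⟨1 / 2, hhalf, by nlinarith⟩

theorem mul_one_sub_lt_one (hmono : MonotoneOn φ (Icc 0 1)) (h0 : 0 ≤ φ 0)
    (hlt : ∀ p ∈ Ico (0 : ℝ) 1, φ p < 1) {p : ℝ} (hp : p ∈ Icc 0 1) :
    φ p * (1 - p) < 1 := by
  rcases hp.2.eq_or_lt with rfl | hp1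
  · norm_num
  · have hφp : 0 ≤ φ p := h0.trans (hmono (by norm_num) hp hp.1)
    calc φ p * (1 - p) ≤ φ p := mul_le_of_le_one_right hφp (by linarith [hp.1])
      _ < 1 := hlt p ⟨hp.1, hp1⟩

end

theorem actSIS_tolerator_threshold_general (δ : ℝ) (hδ : 0 < δ) (φT : ℝ → ℝ)
    (hmono : StrictMonoOn φT (Set.Icc 0 1))
    (hφ0 : φT 0 = 0)
    (hφlt : ∀ p ∈ Set.Ico (0 : ℝ) 1, φT p < 1)
    (M βc : ℝ)
    (hM : IsMaxOn (fun p => φT p * (1 - p)) (Set.Icc 0 1) M ∧ M ∈ Set.Icc (0:ℝ) 1)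
    (hβc : βc = δ / (φT M * (1 - M))) :
    βc / δ > 1 ∧
    ∀ β : ℝ, 0 < β →
      (∃ p ∈ Set.Ioo (0 : ℝ) 1, φT p * (1 - p) = δ / β) → βc ≤ β := by
  obtain ⟨hmax, hM01⟩ := hM
  obtain ⟨q, hq, hgq⟩ := exists_mem_Icc_mul_one_sub_pos hmono hφ0.ge
  have hm_pos : 0 < φT M * (1 - M) := hgq.trans_le (hmax hq)
  have hm_lt_one : φT M * (1 - M) < 1 := mul_one_sub_lt_one hmono.monotoneOn hφ0.ge hφlt hM01
  subst hβc
  refine ⟨?_, ?_⟩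
  · rw [gt_iff_lt, div_div_cancel_left' hδ.ne']
    exact (one_lt_inv₀ hm_pos).2 hm_lt_one
  · rintro β hβ ⟨p, hp, hgp⟩
    have hle : δ / β ≤ φT M * (1 - M) := hgp ▸ hmax (Ioo_subset_Icc_self hp)
    exact (div_le_comm₀ hβ hm_pos).1 hle

/-- actSIS risk-tolerators: the critical transmission rate
β̄_c = δ / max_{p∈[0,1]} φᵀ(p)(1−p) satisfies β̄_c > δ, and endemic
equilibria exist only for β̄ ≥ β̄_c. -/
theorem actSIS_tolerator_threshold (δ : ℝ) (hδ : 0 < δ) (φT : ℝ → ℝ)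
    (hcont : ContinuousOn φT (Set.Icc 0 1))
    (hmono : StrictMonoOn φT (Set.Icc 0 1))
    (hφ0 : φT 0 = 0)
    (hφlt : ∀ p ∈ Set.Ico (0 : ℝ) 1, φT p < 1)
    (hrange : ∀ p ∈ Set.Icc (0 : ℝ) 1, φT p ∈ Set.Icc (0 : ℝ) 1)
    (M βc : ℝ)
    (hM : IsMaxOn (fun p => φT p * (1 - p)) (Set.Icc 0 1) M ∧ M ∈ Set.Icc (0:ℝ) 1)
    (hβc : βc = δ / (φT M * (1 - M))) :
    βc / δ > 1 ∧
    ∀ β : ℝ, 0 < β →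
      (∃ p ∈ Set.Ioo (0 : ℝ) 1, φT p * (1 - p) = δ / β) → βc ≤ β :=
  actSIS_tolerator_threshold_general δ hδ φT hmono hφ0 hφlt M βc hM hβc
end

section
/- For the actSIS risk-tolerator model, if β̄ < β̄_c = δ / max_{p∈[0,1]}(φᵀ(p)(1−p)), then there are no endemic equilibria, while if β̄ > β̄_c there exist at least two endemic equilibria p* ∈ (0,1) satisfying φᵀ(p*)(1−p*) = δ/β̄. -/
/-!
`g` is unimodal on `[0, 1]` with peak `g p̂`. Below `β̄_c` the level `δ / β̄` exceeds that peak,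
so it is never attained. Above `β̄_c` it lies strictly between `0 = g 0 = g 1` and `g p̂`, so the
intermediate value theorem gives one preimage on each side of `p̂`.
-/

open Set

theorem ContinuousOn.exists_mem_Ioo_eq_of_lt_of_lt {f : ℝ → ℝ} {a b c y : ℝ} (hac : a ≤ c)
    (hcb : c ≤ b) (hf : ContinuousOn f (Icc a b)) (ha : f a < y) (hb : f b < y) (hc : y < f c) :
    ∃ p₁ ∈ Ioo a c, ∃ p₂ ∈ Ioo c b, f p₁ = y ∧ f p₂ = y := by
  obtain ⟨p₁, hp₁, hfp₁⟩ :=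
    intermediate_value_Ioo hac (hf.mono (Icc_subset_Icc_right hcb)) ⟨ha, hc⟩
  obtain ⟨p₂, hp₂, hfp₂⟩ :=
    intermediate_value_Ioo' hcb (hf.mono (Icc_subset_Icc_left hac)) ⟨hb, hc⟩
  exact ⟨p₁, hp₁, p₂, hp₂, hfp₁, hfp₂⟩

/-- actSIS risk-tolerators: below the critical rate β̄_c there are no endemic
equilibria; above β̄_c there are at least two. -/
theorem actSIS_tolerator_saddle_node (δ β : ℝ) (hδ : 0 < δ) (hβ : 0 < β)
    (g : ℝ → ℝ) (phat : ℝ) (hphat : phat ∈ Set.Ioo (0 : ℝ) 1)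
    (hcont : ContinuousOn g (Set.Icc 0 1))
    (hg0 : g 0 = 0) (hg1 : g 1 = 0) (hgpos : 0 < g phat)
    (hinc : StrictMonoOn g (Set.Icc 0 phat))
    (hdec : StrictAntiOn g (Set.Icc phat 1))
    (βc : ℝ) (hβc : βc = δ / g phat) :
    (β < βc → ¬∃ p ∈ Set.Ioo (0 : ℝ) 1, g p = δ / β) ∧
    (β > βc → ∃ p₁ ∈ Set.Ioo (0 : ℝ) 1, ∃ p₂ ∈ Set.Ioo (0 : ℝ) 1,
      p₁ ≠ p₂ ∧ g p₁ = δ / β ∧ g p₂ = δ / β) := by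
  subst hβc
  constructor
  · rintro hlt ⟨p, hp, hgp⟩
    have hmax : IsMaxOn g (Icc 0 1) phat :=
      isMaxOn_Icc_of_mono_anti hinc.monotoneOn hdec.antitoneOn
    have hpeak : g phat < δ / β := (lt_div_comm₀ hβ hgpos).mp hlt
    have hle : g p ≤ g phat := hmax (Ioo_subset_Icc_self hp)
    linarith
  · intro hgt
    have hlevel : δ / β < g phat := (div_lt_comm₀ hβ hgpos).mpr hgt
    obtain ⟨p₁, hp₁, p₂, hp₂, hgp₁, hgp₂⟩ :=
      hcont.exists_mem_Ioo_eq_of_lt_of_lt hphat.1.le hphat.2.le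
        (by rw [hg0]; positivity) (by rw [hg1]; positivity) hlevel
    exact ⟨p₁, ⟨hp₁.1, hp₁.2.trans hphat.2⟩, p₂, ⟨hphat.1.trans hp₂.1, hp₂.2⟩,
      (hp₁.2.trans hp₂.1).ne, hgp₁, hgp₂⟩
end

section
/- As β̄ → ∞, the largest endemic equilibrium p*(β̄) of the actSIS risk-tolerator model satisfies p*(β̄) − (1 − δ/β̄) → 0; equivalently, the actSIS endemic equilibrium approaches the SIS endemic equilibrium. -/
/-!
The map `g p = φT p * (1 - p)` vanishes at `1` and is positive just to the left of `1`, since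
`φT → 1` there. So for every `a < 1`, once `δ / β̄ < g a` the intermediate value theorem gives a
root of `g = δ / β̄` in `[a, 1)`, which the largest root dominates: `p*(β̄) → 1`, like `1 - δ / β̄`.
-/

open Filter Set Topology

lemma exists_mem_Ico_eq_of_continuousOn {g : ℝ → ℝ} {a y : ℝ} (ha : a ≤ 1)
    (hg : ContinuousOn g (Icc a 1)) (hg1 : g 1 = 0) (hy : y ∈ Ioc 0 (g a)) :
    ∃ q ∈ Ico a 1, g q = y := by
  obtain ⟨q, ⟨haq, hq1⟩, hgq⟩ := intermediate_value_Icc' ha hg ⟨hg1 ▸ hy.1.le, hy.2⟩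
  refine ⟨q, ⟨haq, lt_of_le_of_ne hq1 ?_⟩, hgq⟩
  rintro rfl
  exact hy.1.ne' (hgq.symm.trans hg1)

theorem tendsto_nhds_one_of_root_le {ι : Type*} {l : Filter ι} {g : ℝ → ℝ}
    (hg : ContinuousOn g (Icc 0 1)) (hg1 : g 1 = 0) (hpos : ∃ᶠ x in 𝓝[<] 1, 0 < g x)
    {y p : ι → ℝ} (hy : Tendsto y l (𝓝[>] 0)) (hp1 : ∀ᶠ i in l, p i < 1)
    (hroot : ∀ᶠ i in l, ∀ q ∈ Ioo 0 1, g q = y i → q ≤ p i) :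
    Tendsto p l (𝓝 1) := by
  refine tendsto_order.2 ⟨fun b hb => ?_, fun b hb => hp1.mono fun i hi => hi.trans hb⟩
  obtain ⟨a, hga, hba, ha1⟩ :=
    (hpos.and_eventually (Ioo_mem_nhdsLT (max_lt hb zero_lt_one))).exists
  have hy_small : ∀ᶠ i in l, y i ∈ Ioo 0 (g a) := hy (Ioo_mem_nhdsGT hga)
  filter_upwards [hy_small, hroot] with i hyi hrooti
  obtain ⟨q, ⟨haq, hq1⟩, hgq⟩ := exists_mem_Ico_eq_of_continuousOn ha1.le
    (hg.mono (Icc_subset_Icc (le_of_max_le_right hba.le) le_rfl)) hg1 (Ioo_subset_Ioc_self hyi)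
  have hq0 : 0 < q := (le_max_right b 0).trans_lt (hba.trans_le haq)
  exact (le_max_left b 0).trans_lt hba |>.trans_le (haq.trans (hrooti q ⟨hq0, hq1⟩ hgq))

theorem actSIS_tolerator_EE_limit_general (δ βc : ℝ) (hδ : 0 < δ)
    (φT : ℝ → ℝ)
    (hcont : ContinuousOn φT (Set.Icc 0 1))
    (hφ1 : Filter.Tendsto φT (nhdsWithin 1 (Set.Iio 1)) (nhds 1))
    (pstar : ℝ → ℝ)
    (hEE : ∀ β : ℝ, βc < β → pstar β ∈ Set.Ioo (0 : ℝ) 1 ∧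
      φT (pstar β) * (1 - pstar β) = δ / β)
    (hlargest : ∀ β : ℝ, βc < β → ∀ q ∈ Set.Ioo (0 : ℝ) 1,
      φT q * (1 - q) = δ / β → q ≤ pstar β) :
    Filter.Tendsto (fun β => pstar β - (1 - δ / β)) Filter.atTop (nhds 0) := by
  have hlevel : Tendsto (fun β : ℝ => δ / β) atTop (𝓝[>] 0) :=
    tendsto_nhdsWithin_iff.2 ⟨tendsto_const_nhds.div_atTop tendsto_id,
      (eventually_gt_atTop 0).mono fun β hβ => div_pos hδ hβ⟩
  have hpos : ∃ᶠ p in 𝓝[<] (1 : ℝ), 0 < φT p * (1 - p) :=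
    ((hφ1.eventually (lt_mem_nhds one_pos)).and self_mem_nhdsWithin).frequently.mono
      fun p ⟨hφp, hp1⟩ => mul_pos hφp (sub_pos.2 hp1)
  have hpstar : Tendsto pstar atTop (𝓝 1) :=
    tendsto_nhds_one_of_root_le
      (hcont.mul (continuousOn_const.sub continuousOn_id)) (by simp) hpos hlevel
      ((eventually_gt_atTop βc).mono fun β hβ => (hEE β hβ).1.2)
      ((eventually_gt_atTop βc).mono hlargest)
  simpa using
    hpstar.sub ((tendsto_const_nhds (x := (1 : ℝ))).sub (hlevel.mono_right nhdsWithin_le_nhds))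

/-- As β̄ → ∞, the largest endemic equilibrium of the actSIS risk-tolerator
model approaches the SIS endemic equilibrium 1 − δ/β̄. -/
theorem actSIS_tolerator_EE_limit (δ βc : ℝ) (hδ : 0 < δ) (hβc : 0 < βc)
    (φT : ℝ → ℝ)
    (hcont : ContinuousOn φT (Set.Icc 0 1))
    (hmono : StrictMonoOn φT (Set.Icc 0 1))
    (hφ0 : φT 0 = 0)
    (hφ1 : Filter.Tendsto φT (nhdsWithin 1 (Set.Iio 1)) (nhds 1))
    (pstar : ℝ → ℝ)
    (hEE : ∀ β : ℝ, βc < β → pstar β ∈ Set.Ioo (0 : ℝ) 1 ∧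
      φT (pstar β) * (1 - pstar β) = δ / β)
    (hlargest : ∀ β : ℝ, βc < β → ∀ q ∈ Set.Ioo (0 : ℝ) 1,
      φT q * (1 - q) = δ / β → q ≤ pstar β) :
    Filter.Tendsto (fun β => pstar β - (1 - δ / β)) Filter.atTop (nhds 0) :=
  actSIS_tolerator_EE_limit_general δ βc hδ φT hcont hφ1 pstar hEE hlargest
end

section
/- For the actSIS risk-averter model, every endemic equilibrium (p*, p*) with p* ∈ (0,1) is locally exponentially stable: the trace of the Jacobian at the equilibrium is negative and its determinant is positive. -/
/-! The Jacobian has negative diagonal entries and off-diagonal entries of opposite signs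
(the infection rate is damped by `φA' ≥ 0`, while `p_s` follows `p`), and any real
`2 × 2` matrix with this sign pattern has negative trace and positive determinant. -/

theorem Matrix.trace_neg_and_det_pos_of_sign_pattern {A : Matrix (Fin 2) (Fin 2) ℝ}
    (h₀₀ : A 0 0 < 0) (h₁₁ : A 1 1 < 0) (hoff : A 0 1 * A 1 0 ≤ 0) :
    A.trace < 0 ∧ 0 < A.det := by
  rw [Matrix.trace_fin_two, Matrix.det_fin_two]
  exact ⟨by linarith, by nlinarith [mul_pos_of_neg_of_neg h₀₀ h₁₁]⟩

theorem actSIS_averter_EE_stable_general (β δ τ : ℝ) (hβ : 0 < β) (hδ : 0 < δ)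
    (hτ : 0 < τ) (φA' : ℝ → ℝ)
    (hφ' : ∀ x, 0 ≤ φA' x)
    (p : ℝ) (hp : p ∈ Set.Ioo (0 : ℝ) 1)
    (J : Matrix (Fin 2) (Fin 2) ℝ)
    (hJ : J = !![-(δ * p / (1 - p)), -(β * (1 - p) * p * φA' p);
                 1 / τ, -(1 / τ)]) :
    J.trace < 0 ∧ 0 < J.det := by
  obtain ⟨hp₀, hp₁⟩ := hp
  have h1p : 0 < 1 - p := by linarith
  have hφp := hφ' p
  subst hJ
  apply Matrix.trace_neg_and_det_pos_of_sign_pattern <;>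
    simp only [Matrix.of_apply, Matrix.cons_val', Matrix.cons_val_zero, Matrix.cons_val_one,
      Matrix.empty_val', Matrix.cons_val_fin_one]
  · exact neg_neg_of_pos (by positivity)
  · exact neg_neg_of_pos (by positivity)
  · exact mul_nonpos_of_nonpos_of_nonneg (neg_nonpos_of_nonneg (by positivity)) (by positivity)

/-- actSIS risk-averters: every endemic equilibrium is locally exponentially
stable: the Jacobian has negative trace and positive determinant. -/
theorem actSIS_averter_EE_stable (β δ τ : ℝ) (hβ : 0 < β) (hδ : 0 < δ)
    (hτ : 0 < τ) (φA φA' : ℝ → ℝ) (hderiv : ∀ x, HasDerivAt φA (φA' x) x)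
    (hφ' : ∀ x, 0 ≤ φA' x)
    (p : ℝ) (hp : p ∈ Set.Ioo (0 : ℝ) 1)
    (hEE : (1 - φA p) * (1 - p) = δ / β)
    (J : Matrix (Fin 2) (Fin 2) ℝ)
    (hJ : J = !![-(δ * p / (1 - p)), -(β * (1 - p) * p * φA' p);
                 1 / τ, -(1 / τ)]) :
    J.trace < 0 ∧ 0 < J.det :=
  actSIS_averter_EE_stable_general β δ τ hβ hδ hτ φA' hφ' p hp J hJ
end
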